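/- arXiv:2402.12464 — 4 statements merged into one kernel-verified Lean document; each statement's English description precedes it below -/
import Mathlib

section
/- Let E be a real inner product space, f(p) ∈ ℝ, g, G ∈ E (exact and approximate gradients), H, B : E →L[ℝ] E (exact and approximate Hessians), and v ∈ E. Suppose (i) f(R(v)) ≤ f(p) + ⟨g, v⟩ + (1/2)⟨H v, v⟩ + (L/6)‖v‖³ for the true values, (ii) the cubic model value f(p) + ⟨G, v⟩ + (1/2)⟨B v, v⟩ + (2^α σ/6)‖v‖³ ≤ f(p), (iii) ‖g − G‖ ≤ (κ_g/2^(α-1))·w² and ‖H − B‖ ≤ (κ_B/2^(α-1))·w for some w ≥ 0, and (iv) 2^(α-1)·σ ≥ 12(2κ_g + κ_B) + L with σ ≥ σ₁ > 0. Then f(R(v)) ≤ f(p) + (σ/24)·w³ − (2^α σ/24)·‖v‖³. -/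
/-! Subtracting the model inequality from the Taylor bound leaves the gradient and Hessian
errors, which Cauchy–Schwarz bounds by `‖g - G‖ ‖v‖ + ‖H - B‖ ‖v‖² / 2`. The accuracy
requirements turn these into `w² ‖v‖` and `w ‖v‖²` terms, and Young's inequality splits both
into `w³` and `‖v‖³`. The condition on `2 ^ α σ` makes the coefficients small enough that the
`w³` part is at most `σ / 24` and the `‖v‖³` part is absorbed by the cubic regularization. -/

open scoped RealInnerProductSpace

section InnerProduct

variable {E : Type*} [NormedAddCommGroup E] [InnerProductSpace ℝ E]

theorem ContinuousLinearMap.real_inner_apply_self_le (A : E →L[ℝ] E) (v : E) :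
    ⟪A v, v⟫ ≤ ‖A‖ * ‖v‖ ^ 2 :=
  calc ⟪A v, v⟫ ≤ ‖A v‖ * ‖v‖ := real_inner_le_norm _ _
    _ ≤ ‖A‖ * ‖v‖ * ‖v‖ := by gcongr; exact A.le_opNorm v
    _ = ‖A‖ * ‖v‖ ^ 2 := by ring

theorem le_model_add_approx_error {fp fR L M : ℝ} {g G v : E} {H B : E →L[ℝ] E}
    (hTaylor : fR ≤ fp + ⟪g, v⟫ + (1 / 2) * ⟪H v, v⟫ + (L / 6) * ‖v‖ ^ 3)
    (hmodel : fp + ⟪G, v⟫ + (1 / 2) * ⟪B v, v⟫ + (M / 6) * ‖v‖ ^ 3 ≤ fp) :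
    fR ≤ fp + ‖g - G‖ * ‖v‖ + ‖H - B‖ * ‖v‖ ^ 2 / 2 + (L - M) / 6 * ‖v‖ ^ 3 := by
  have hgrad : ⟪g, v⟫ - ⟪G, v⟫ ≤ ‖g - G‖ * ‖v‖ := by
    rw [← inner_sub_left]; exact real_inner_le_norm _ _
  have hhess : ⟪H v, v⟫ - ⟪B v, v⟫ ≤ ‖H - B‖ * ‖v‖ ^ 2 := by
    rw [← inner_sub_left, ← sub_apply]
    exact (H - B).real_inner_apply_self_le v
  linarith

end InnerProduct

theorem sq_mul_le_of_nonneg {a b : ℝ} (ha : 0 ≤ a) (hb : 0 ≤ b) :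
    a ^ 2 * b ≤ (2 * a ^ 3 + b ^ 3) / 3 := by
  nlinarith [mul_nonneg (sq_nonneg (a - b)) (by linarith : 0 ≤ 2 * a + b)]

theorem approx_error_le {P κg κB w t eg eH : ℝ} (hP : 0 < P) (hκg : 0 ≤ κg) (hκB : 0 ≤ κB)
    (hw : 0 ≤ w) (ht : 0 ≤ t) (heg : eg ≤ κg / (P / 2) * w ^ 2) (heH : eH ≤ κB / (P / 2) * w) :
    eg * t + eH * t ^ 2 / 2 ≤ 2 * (2 * κg + κB) / (3 * P) * (w ^ 3 + t ^ 3) := by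
  calc eg * t + eH * t ^ 2 / 2
      ≤ κg / (P / 2) * w ^ 2 * t + κB / (P / 2) * w * t ^ 2 / 2 := by gcongr
    _ = 2 / P * (κg * (w ^ 2 * t) + κB * (t ^ 2 * w) / 2) := by ring
    _ ≤ 2 / P * (κg * ((2 * w ^ 3 + t ^ 3) / 3) + κB * ((2 * t ^ 3 + w ^ 3) / 3) / 2) := by
        gcongr
        exacts [sq_mul_le_of_nonneg hw ht, sq_mul_le_of_nonneg ht hw]
    _ ≤ 2 / P * ((2 * κg + κB) / 3 * (w ^ 3 + t ^ 3)) := by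
        gcongr
        linarith [mul_nonneg hκg (pow_nonneg ht 3), mul_nonneg hκB (pow_nonneg hw 3)]
    _ = 2 * (2 * κg + κB) / (3 * P) * (w ^ 3 + t ^ 3) := by field_simp

theorem stmt_3_general {E : Type*} [NormedAddCommGroup E] [InnerProductSpace ℝ E]
    (fp fR : ℝ) (g G v : E) (H B : E →L[ℝ] E)
    (L σ κg κB w : ℝ) (α : ℕ)
    (hL : 0 ≤ L) (hκg : 0 ≤ κg) (hκB : 0 ≤ κB)
    (hw : 0 ≤ w)
    (hTaylor : fR ≤ fp + ⟪g, v⟫ + (1 / 2) * ⟪H v, v⟫ + (L / 6) * ‖v‖ ^ 3)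
    (hmodel : fp + ⟪G, v⟫ + (1 / 2) * ⟪B v, v⟫ + (2 ^ α * σ / 6) * ‖v‖ ^ 3 ≤ fp)
    (hg : ‖g - G‖ ≤ (κg / (2 ^ α / 2)) * w ^ 2)
    (hH : ‖H - B‖ ≤ (κB / (2 ^ α / 2)) * w)
    (hα : 2 ^ α * σ / 2 ≥ 12 * (2 * κg + κB) + L) :
    fR ≤ fp + (σ / 24) * w ^ 3 - (2 ^ α * σ / 24) * ‖v‖ ^ 3 := by
  have hP : (1 : ℝ) ≤ 2 ^ α := one_le_pow₀ one_le_two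
  have hσ : 0 ≤ σ := by nlinarith
  have hcoeff : 2 * (2 * κg + κB) / (3 * 2 ^ α) ≤ σ / 36 := by
    rw [div_le_iff₀ (by positivity)]; nlinarith
  have herror := approx_error_le (by positivity) hκg hκB hw (norm_nonneg v) hg hH
  have hw3 : 0 ≤ w ^ 3 := by positivity
  have hv3 : 0 ≤ ‖v‖ ^ 3 := by positivity
  have hcubic : 0 ≤ (2 ^ α * σ / 8 - σ / 36 - L / 6) * ‖v‖ ^ 3 :=
    mul_nonneg (by nlinarith) hv3
  linarith [le_model_add_approx_error hTaylor hmodel,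
    mul_le_mul_of_nonneg_right hcoeff (add_nonneg hw3 hv3), mul_nonneg hσ hw3]

theorem stmt_3 {E : Type*} [NormedAddCommGroup E] [InnerProductSpace ℝ E]
    (fp fR : ℝ) (g G v : E) (H B : E →L[ℝ] E)
    (L σ σ₁ κg κB w : ℝ) (α : ℕ)
    (hL : 0 ≤ L) (hσ₁ : 0 < σ₁) (hσ : σ₁ ≤ σ) (hκg : 0 ≤ κg) (hκB : 0 ≤ κB)
    (hw : 0 ≤ w)
    (hTaylor : fR ≤ fp + ⟪g, v⟫ + (1 / 2) * ⟪H v, v⟫ + (L / 6) * ‖v‖ ^ 3)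
    (hmodel : fp + ⟪G, v⟫ + (1 / 2) * ⟪B v, v⟫ + (2 ^ α * σ / 6) * ‖v‖ ^ 3 ≤ fp)
    (hg : ‖g - G‖ ≤ (κg / (2 ^ α / 2)) * w ^ 2)
    (hH : ‖H - B‖ ≤ (κB / (2 ^ α / 2)) * w)
    (hα : 2 ^ α * σ / 2 ≥ 12 * (2 * κg + κB) + L) :
    fR ≤ fp + (σ / 24) * w ^ 3 - (2 ^ α * σ / 24) * ‖v‖ ^ 3 :=
  stmt_3_general fp fR g G v H B L σ κg κB w α hL hκg hκB hw hTaylor hmodel hg hH hα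
end

section
/- Let E be a real inner product space, g, G ∈ E, H, B : E →L[ℝ] E continuous linear operators, v ∈ E, and let m'(v) = G + B v + s‖v‖·v with s > 0. Suppose ‖m'(v)‖ ≤ θ‖v‖², ‖𝒢 − g − H v‖ ≤ (L'/2)‖v‖², ‖g − G‖ ≤ 2κ_g·w², and ‖(B − H)v‖ ≤ 2κ_B·w·‖v‖, where w ≥ 0 and 𝒢 ∈ E. Then ‖𝒢‖ ≤ ((L' + 2(θ+s) + 4(κ_g + κ_B))/2) · max{w, ‖v‖}². -/
theorem stmt_7 {E : Type*} [NormedAddCommGroup E] [InnerProductSpace ℝ E]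
    (g G v 𝒢 : E) (H B : E →L[ℝ] E)
    (θ L' κg κB s w : ℝ)
    (hθ : 0 ≤ θ) (hL' : 0 ≤ L') (hκg : 0 ≤ κg) (hκB : 0 ≤ κB) (hs : 0 < s)
    (hw : 0 ≤ w)
    (hmodel : ‖G + B v + (s * ‖v‖) • v‖ ≤ θ * ‖v‖ ^ 2)
    (hG : ‖𝒢 - g - H v‖ ≤ L' / 2 * ‖v‖ ^ 2)
    (hg : ‖g - G‖ ≤ 2 * κg * w ^ 2)
    (hB : ‖(B - H) v‖ ≤ 2 * κB * w * ‖v‖) :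
    ‖𝒢‖ ≤ (L' + 2 * (θ + s) + 4 * (κg + κB)) / 2 * max w ‖v‖ ^ 2 := by
  have hdecomp : 𝒢 = (𝒢 - g - H v) + (g - G) - (B - H) v
      + (G + B v + (s * ‖v‖) • v) - (s * ‖v‖) • v := by
    simp [ContinuousLinearMap.sub_apply]
    abel
  have hsv : ‖(s * ‖v‖) • v‖ = s * ‖v‖ ^ 2 := by
    rw [norm_smul, Real.norm_eq_abs, abs_of_nonneg (by positivity)]
    ring
  have htri : ‖𝒢‖ ≤ ‖𝒢 - g - H v‖ + ‖g - G‖ + ‖(B - H) v‖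
      + ‖G + B v + (s * ‖v‖) • v‖ + ‖(s * ‖v‖) • v‖ := by
    calc ‖𝒢‖ = ‖(𝒢 - g - H v) + (g - G) - (B - H) v
        + (G + B v + (s * ‖v‖) • v) - (s * ‖v‖) • v‖ := by rw [← hdecomp]
      _ ≤ _ := by
        refine (norm_sub_le _ _).trans ?_
        gcongr
        refine (norm_add_le _ _).trans ?_
        gcongr
        refine (norm_sub_le _ _).trans ?_
        gcongr
        exact norm_add_le _ _
  have hM1 : ‖v‖ ≤ max w ‖v‖ := le_max_right _ _
  have hM2 : w ≤ max w ‖v‖ := le_max_left _ _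
  have hv0 : 0 ≤ ‖v‖ := norm_nonneg _
  nlinarith [htri, hsv, norm_nonneg (g - G), norm_nonneg ((B - H) v),
    mul_le_mul hM1 hM1 hv0 (le_trans hw hM2),
    mul_le_mul hM2 hM2 hw (le_trans hw hM2),
    mul_le_mul hM2 hM1 hv0 (le_trans hw hM2)]
end

section
/- Let E be an n-dimensional real inner product space with orthonormal basis e_1,...,e_n, let f̂ : E → ℝ, g ∈ E, H : E →L[ℝ] E, and suppose |f̂(v) − f̂(0) − ⟨g, v⟩ − (1/2)⟨H v, v⟩| ≤ (L/6)‖v‖³ for all v ∈ E. For h > 0 define the central-difference gradient G := ∑_{i=1}^n ((f̂(h e_i) − f̂(−h e_i))/(2h)) e_i. Then ‖G − g‖ ≤ (L√n/6)·h². -/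
open scoped RealInnerProductSpace

theorem stmt_16 {E : Type*} [NormedAddCommGroup E] [InnerProductSpace ℝ E]
    (n : ℕ) (hn : 0 < n) (b : OrthonormalBasis (Fin n) ℝ E)
    (fhat : E → ℝ) (g : E) (H : E →L[ℝ] E) (L h : ℝ) (hL : 0 ≤ L) (hh : 0 < h)
    (hTaylor : ∀ v : E,
      |fhat v - fhat 0 - ⟪g, v⟫ - (1 / 2) * ⟪H v, v⟫| ≤ L / 6 * ‖v‖ ^ 3) :
    ‖(∑ i, ((fhat (h • b i) - fhat (-(h • b i))) / (2 * h)) • b i) - g‖ ≤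
      L * Real.sqrt n / 6 * h ^ 2 := by
  set c : Fin n → ℝ := fun i => (fhat (h • b i) - fhat (-(h • b i))) / (2 * h) with hc
  set a : Fin n → ℝ := fun i => c i - ⟪b i, g⟫ with ha
  -- each coordinate bound
  have key : ∀ i, |a i| ≤ L / 6 * h ^ 2 := by
    intro i
    have hnorm : ‖h • b i‖ = h := by
      rw [norm_smul, b.orthonormal.1 i, Real.norm_eq_abs, abs_of_pos hh, mul_one]
    have h1 := hTaylor (h • b i)
    have h2 := hTaylor (-(h • b i))
    rw [hnorm] at h1
    rw [norm_neg, hnorm] at h2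
    have hgp : ⟪g, h • b i⟫ = h * ⟪b i, g⟫ := by
      rw [real_inner_smul_right, real_inner_comm]
    have hgn : ⟪g, -(h • b i)⟫ = -(h * ⟪b i, g⟫) := by
      rw [inner_neg_right, hgp]
    have hHn : ⟪H (-(h • b i)), -(h • b i)⟫ = ⟪H (h • b i), h • b i⟫ := by
      rw [map_neg, inner_neg_neg]
    rw [hgp] at h1
    rw [hgn, hHn] at h2
    have hd : |fhat (h • b i) - fhat (-(h • b i)) - 2 * h * ⟪b i, g⟫| ≤
        2 * (L / 6 * h ^ 3) := by
      have := abs_sub (fhat (h • b i) - fhat 0 - h * ⟪b i, g⟫ -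
        (1 / 2) * ⟪H (h • b i), h • b i⟫)
        (fhat (-(h • b i)) - fhat 0 - -(h * ⟪b i, g⟫) -
        (1 / 2) * ⟪H (h • b i), h • b i⟫)
      calc |fhat (h • b i) - fhat (-(h • b i)) - 2 * h * ⟪b i, g⟫|
          = |(fhat (h • b i) - fhat 0 - h * ⟪b i, g⟫ -
            (1 / 2) * ⟪H (h • b i), h • b i⟫) -
            (fhat (-(h • b i)) - fhat 0 - -(h * ⟪b i, g⟫) -
            (1 / 2) * ⟪H (h • b i), h • b i⟫)| := by ring_nf
        _ ≤ _ := abs_sub _ _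
        _ ≤ L / 6 * h ^ 3 + L / 6 * h ^ 3 := add_le_add h1 h2
        _ = 2 * (L / 6 * h ^ 3) := by ring
    have hrw : a i = (fhat (h • b i) - fhat (-(h • b i)) - 2 * h * ⟪b i, g⟫) / (2 * h) := by
      simp only [ha, hc]
      field_simp
    have : |a i| = |fhat (h • b i) - fhat (-(h • b i)) - 2 * h * ⟪b i, g⟫| / (2 * h) := by
      rw [hrw, abs_div, abs_of_pos (by linarith : (0:ℝ) < 2 * h)]
    rw [this]
    rw [div_le_iff₀ (by linarith : (0:ℝ) < 2 * h)]
    calc |fhat (h • b i) - fhat (-(h • b i)) - 2 * h * ⟪b i, g⟫|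
        ≤ 2 * (L / 6 * h ^ 3) := hd
      _ = L / 6 * h ^ 2 * (2 * h) := by ring
  -- rewrite the difference as a sum
  have hg : g = ∑ i, ⟪b i, g⟫ • b i := (b.sum_repr' g).symm
  have hdiff : (∑ i, c i • b i) - g = ∑ i, a i • b i := by
    conv_lhs => rw [hg]
    rw [← Finset.sum_sub_distrib]
    simp [ha, sub_smul]
  rw [hdiff]
  have hsq : ‖∑ i, a i • b i‖ ^ 2 = ∑ i, (a i) ^ 2 := by
    rw [← real_inner_self_eq_norm_sq]
    rw [b.orthonormal.inner_sum a a Finset.univ]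
    simp [sq]
  have hbound : ‖∑ i, a i • b i‖ ^ 2 ≤ n * (L / 6 * h ^ 2) ^ 2 := by
    rw [hsq]
    calc ∑ i, (a i) ^ 2 ≤ ∑ _i : Fin n, (L / 6 * h ^ 2) ^ 2 := by
          apply Finset.sum_le_sum
          intro i _
          calc (a i) ^ 2 = |a i| ^ 2 := (sq_abs _).symm
            _ ≤ (L / 6 * h ^ 2) ^ 2 := pow_le_pow_left₀ (abs_nonneg _) (key i) 2
      _ = n * (L / 6 * h ^ 2) ^ 2 := by simp [Finset.sum_const]
  have hnn : 0 ≤ L * Real.sqrt n / 6 * h ^ 2 := by positivity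
  have : ‖∑ i, a i • b i‖ ^ 2 ≤ (L * Real.sqrt n / 6 * h ^ 2) ^ 2 := by
    calc ‖∑ i, a i • b i‖ ^ 2 ≤ n * (L / 6 * h ^ 2) ^ 2 := hbound
      _ = (L * Real.sqrt n / 6 * h ^ 2) ^ 2 := by
          have hsn : Real.sqrt n ^ 2 = n := Real.sq_sqrt (Nat.cast_nonneg n)
          nlinarith [hsn]
  nlinarith [norm_nonneg (∑ i, a i • b i)]
end

section
/- Let E be an n-dimensional real inner product space with orthonormal basis e_1,...,e_n, g ∈ E, H : E →L[ℝ] E self-adjoint, h > 0, L' ≥ 0, and let 𝒢 : E → E satisfy ‖𝒢(v) − g − H v‖ ≤ (L'/2)‖v‖² for all v. Define A : E →L[ℝ] E on the basis by A e_i := (𝒢(h e_i) − g)/h, and B := (A + A*)/2. Then ‖B − H‖ ≤ (√n · L'/2)·h, where ‖·‖ is the operator norm. -/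
open scoped RealInnerProductSpace

lemma norm_le_of_ob {E : Type*} [NormedAddCommGroup E] [InnerProductSpace ℝ E]
    [FiniteDimensional ℝ E] {n : ℕ} (b : OrthonormalBasis (Fin n) ℝ E)
    (T : E →L[ℝ] E) {c : ℝ} (hc : 0 ≤ c) (hT : ∀ i, ‖T (b i)‖ ≤ c) :
    ‖T‖ ≤ Real.sqrt n * c := by
  refine T.opNorm_le_bound (by positivity) (fun x => ?_)
  have hx : T x = ∑ i, b.repr x i • T (b i) := by
    conv_lhs => rw [← b.sum_repr x]
    simp [map_sum]
  have key : ∑ i, |b.repr x i| ≤ Real.sqrt n * ‖x‖ := by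
    have h1 : (∑ i, |b.repr x i| * 1) ^ 2 ≤ (∑ i : Fin n, |b.repr x i| ^ 2) *
        ∑ _i : Fin n, (1:ℝ) ^ 2 := Finset.sum_mul_sq_le_sq_mul_sq _ _ _
    have h2 : (∑ i : Fin n, |b.repr x i| ^ 2) = ‖x‖ ^ 2 := by
      have := b.repr.norm_map x
      rw [EuclideanSpace.norm_eq] at this
      rw [← this, Real.sq_sqrt (by positivity)]
      simp [sq_abs]
    simp only [mul_one, one_pow, Finset.sum_const, Finset.card_univ, Fintype.card_fin,
      nsmul_eq_mul] at h1
    rw [h2] at h1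
    have := Real.sqrt_le_sqrt h1
    rwa [Real.sqrt_sq (Finset.sum_nonneg fun i _ => abs_nonneg _), Real.sqrt_mul (by positivity),
      Real.sqrt_sq (norm_nonneg x), mul_comm] at this
  calc ‖T x‖ ≤ ∑ i, ‖b.repr x i • T (b i)‖ := by rw [hx]; exact norm_sum_le _ _
    _ ≤ ∑ i, |b.repr x i| * c := by
        refine Finset.sum_le_sum fun i _ => ?_
        rw [norm_smul, Real.norm_eq_abs]
        exact mul_le_mul_of_nonneg_left (hT i) (abs_nonneg _)
    _ = (∑ i, |b.repr x i|) * c := by rw [Finset.sum_mul]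
    _ ≤ (Real.sqrt n * ‖x‖) * c := mul_le_mul_of_nonneg_right key hc
    _ = Real.sqrt n * c * ‖x‖ := by ring

theorem stmt_17 {E : Type*} [NormedAddCommGroup E] [InnerProductSpace ℝ E]
    [FiniteDimensional ℝ E] (n : ℕ) (hn : 0 < n)
    (b : OrthonormalBasis (Fin n) ℝ E)
    (g : E) (H : E →L[ℝ] E) (hH : IsSelfAdjoint H)
    (𝒢 : E → E) (L' h : ℝ) (hL' : 0 ≤ L') (hh : 0 < h)
    (hG : ∀ v : E, ‖𝒢 v - g - H v‖ ≤ L' / 2 * ‖v‖ ^ 2)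
    (A : E →L[ℝ] E) (hA : ∀ i, A (b i) = h⁻¹ • (𝒢 (h • b i) - g)) :
    ‖((1 / 2 : ℝ) • (A + ContinuousLinearMap.adjoint A)) - H‖ ≤
      Real.sqrt n * L' / 2 * h := by
  set c : ℝ := L' / 2 * h with hc
  have hc0 : 0 ≤ c := by positivity
  have hD : ∀ i, ‖(A - H) (b i)‖ ≤ c := by
    intro i
    have hbi : ‖b i‖ = 1 := b.orthonormal.1 i
    have h1 : (A - H) (b i) = h⁻¹ • (𝒢 (h • b i) - g - H (h • b i)) := by
      simp only [ContinuousLinearMap.sub_apply, hA i, map_smul, smul_sub, smul_smul,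
        inv_mul_cancel₀ hh.ne', one_smul]
    rw [h1, norm_smul, norm_inv, Real.norm_eq_abs, abs_of_pos hh]
    have h2 := hG (h • b i)
    have h3 : ‖h • b i‖ ^ 2 = h ^ 2 := by
      rw [norm_smul, Real.norm_eq_abs, hbi, mul_one, sq_abs]
    rw [h3] at h2
    calc h⁻¹ * ‖𝒢 (h • b i) - g - H (h • b i)‖ ≤ h⁻¹ * (L' / 2 * h ^ 2) := by
          exact mul_le_mul_of_nonneg_left h2 (by positivity)
      _ = c := by field_simp [hc]; ring
  have hDnorm : ‖A - H‖ ≤ Real.sqrt n * c := norm_le_of_ob b (A - H) hc0 hD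
  have hadj : ContinuousLinearMap.adjoint (A - H) = ContinuousLinearMap.adjoint A - H := by
    rw [map_sub, hH.adjoint_eq]
  have hDadj : ‖ContinuousLinearMap.adjoint A - H‖ ≤ Real.sqrt n * c := by
    rw [← hadj]
    rw [show ‖ContinuousLinearMap.adjoint (A - H)‖ = ‖A - H‖ from
      LinearIsometryEquiv.norm_map _ _]
    exact hDnorm
  have key : ((1 / 2 : ℝ) • (A + ContinuousLinearMap.adjoint A)) - H =
      (1 / 2 : ℝ) • ((A - H) + (ContinuousLinearMap.adjoint A - H)) := by
    rw [smul_add, smul_add]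
    ext x
    simp only [ContinuousLinearMap.sub_apply, ContinuousLinearMap.add_apply,
      ContinuousLinearMap.smul_apply, smul_sub]
    module
  rw [key]
  have hns := norm_smul (1/2 : ℝ) ((A - H) + (ContinuousLinearMap.adjoint A - H))
  rw [hns]
  have : ‖(A - H) + (ContinuousLinearMap.adjoint A - H)‖ ≤ 2 * (Real.sqrt n * c) := by
    calc ‖(A - H) + (ContinuousLinearMap.adjoint A - H)‖
        ≤ ‖A - H‖ + ‖ContinuousLinearMap.adjoint A - H‖ := norm_add_le _ _
      _ ≤ Real.sqrt n * c + Real.sqrt n * c := add_le_add hDnorm hDadj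
      _ = 2 * (Real.sqrt n * c) := by ring
  calc ‖(1/2 : ℝ)‖ * ‖(A - H) + (ContinuousLinearMap.adjoint A - H)‖
      ≤ ‖(1/2 : ℝ)‖ * (2 * (Real.sqrt n * c)) :=
        mul_le_mul_of_nonneg_left this (norm_nonneg _)
    _ = Real.sqrt n * L' / 2 * h := by
        rw [Real.norm_eq_abs, abs_of_pos (by norm_num : (0:ℝ) < 1/2), hc]; ring
end
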